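/- arXiv:1405.3069 — 2 statements merged into one kernel-verified Lean document; each statement's English description precedes it below -/
import Mathlib

section
/- Let G = (Ξ, Σ, Δ) be a grammar in 2-normal form, b = w_1* … w_d* a bounded expression over Σ, and G^∩, G^⋈, ι as defined. For every X ∈ Ξ, 1 ≤ s ≤ x ≤ d, k > 0 and every control set Γ ⊆ (Δ^⋈)*: if L^{(k)}_{[q^{(s)}_1 X q^{(x)}_1]}(G^⋈) ⊆ L̂_{[q^{(s)}_1 X q^{(x)}_1]}(Γ, G^⋈), then L^{(k)}_{[q^{(s)}_1 X q^{(x)}_1]}(G^∩) ⊆ L̂_{[q^{(s)}_1 X q^{(x)}_1]}(ι^{−1}(Γ), G^∩), where ι^{−1}(Γ) = { δ ∈ (Δ^∩)* | ι(δ) ∈ Γ } and ι extends to control words letterwise. -/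
namespace Paper

/-- A word over nonterminals `N` and terminals `T`. -/
abbrev Word (N T : Type) := List (N ⊕ T)

/-- A production of a grammar. -/
abbrev CProd (N T : Type) := N × Word N T

/-- A grammar, given by its set of productions. -/
structure CFG (N T : Type) where
  prods : Set (CProd N T)

variable {N T : Type}

/-- number of occurrences of nonterminals in a word -/
def ntCount (u : Word N T) : ℕ := (u.filter (fun s => s.isLeft)).length

/-- number of occurrences of terminals in a word -/
def tCount (u : Word N T) : ℕ := (u.filter (fun s => s.isRight)).length

/-- the result of applying production `p` at position `j` of `u` -/
def applyProd (p : CProd N T) (j : ℕ) (u : Word N T) : Word N T :=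
  u.take j ++ p.2 ++ u.drop (j + 1)

/-- `KSeq G k u γjs v`: a step sequence from `u` to `v` applying the indicated
productions at the indicated positions, in which every word (including `u`, `v`)
has at most `k` occurrences of nonterminals (`k = ⊤` places no restriction). -/
inductive KSeq (G : CFG N T) (k : ℕ∞) : Word N T → List (CProd N T × ℕ) → Word N T → Prop
  | refl (u : Word N T) : (ntCount u : ℕ∞) ≤ k → KSeq G k u [] u
  | step {u v : Word N T} {p : CProd N T} {j : ℕ} {rest : List (CProd N T × ℕ)} :
      (ntCount u : ℕ∞) ≤ k → p ∈ G.prods → u[j]? = some (Sum.inl p.1) →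
      KSeq G k (applyProd p j u) rest v → KSeq G k u ((p, j) :: rest) v

/-- words annotated with the index of the step at which each symbol occurrence appeared -/
abbrev AWord (N T : Type) := List ((N ⊕ T) × ℕ)

def strip (u : AWord N T) : Word N T := u.map Prod.fst

def ntCountA (u : AWord N T) : ℕ := (u.filter (fun s => s.1.isLeft)).length

def applyProdA (p : CProd N T) (j m : ℕ) (u : AWord N T) : AWord N T :=
  u.take j ++ p.2.map (fun s => (s, m)) ++ u.drop (j + 1)

/-- the depth-first condition: position `j` carries a maximal first-appearance
index among the nonterminal occurrences of `u` -/
def dfOK (u : AWord N T) (j : ℕ) : Prop :=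
  ∀ i x o, u[(i : ℕ)]? = some (Sum.inl x, o) → ∀ s oj, u[j]? = some (s, oj) → o ≤ oj

/-- `DFSeq G k m u γjs v`: a `k`-index depth-first step sequence on annotated words,
where `m` is the index (in the whole sequence) of the current word `u`. -/
inductive DFSeq (G : CFG N T) (k : ℕ∞) : ℕ → AWord N T → List (CProd N T × ℕ) → AWord N T → Prop
  | refl (m : ℕ) (u : AWord N T) : (ntCountA u : ℕ∞) ≤ k → DFSeq G k m u [] u
  | step {m : ℕ} {u v : AWord N T} {p : CProd N T} {j o : ℕ} {rest : List (CProd N T × ℕ)} :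
      (ntCountA u : ℕ∞) ≤ k → p ∈ G.prods → u[j]? = some (Sum.inl p.1, o) →
      dfOK u j →
      DFSeq G k (m + 1) (applyProdA p j (m + 1) u) rest v →
      DFSeq G k m u ((p, j) :: rest) v

/-- `u ⇒^γ v` by a `k`-index step sequence (positions existentially quantified). -/
def CtrlSeq (G : CFG N T) (k : ℕ∞) (u : Word N T) (γ : List (CProd N T)) (v : Word N T) : Prop :=
  ∃ js : List ℕ, js.length = γ.length ∧ KSeq G k u (γ.zip js) v

/-- annotate a word as an initial word of a step sequence -/
def annot (u : Word N T) : AWord N T := u.map (fun s => (s, 0))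

/-- `u ⇒^γ v` by a `k`-index depth-first step sequence starting at `u`. -/
def DFCtrlFrom (G : CFG N T) (k : ℕ∞) (u : Word N T) (γ : List (CProd N T)) (v : Word N T) :
    Prop :=
  ∃ (js : List ℕ) (va : AWord N T),
    js.length = γ.length ∧ DFSeq G k 0 (annot u) (γ.zip js) va ∧ strip va = v

/-- embedding of terminal words -/
def tw (w : List T) : Word N T := w.map Sum.inr

/-- the sentential word `u Y v` where `u, v` are terminal and `Y` is an optional nonterminal -/
def sent (u : List T) (Y : Option N) (v : List T) : Word N T :=
  tw u ++ (Y.elim [] (fun y => [Sum.inl y])) ++ tw v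

/-- `L^{(k)}_{X,Y}(G) = { u·v | X ⇒* u Y v by a k-index step sequence }`;
`Y = none` stands for `ε`. -/
def LKY (G : CFG N T) (k : ℕ∞) (X : N) (Y : Option N) : Set (List T) :=
  {w | ∃ u v γ, w = u ++ v ∧ CtrlSeq G k [Sum.inl X] γ (sent u Y v)}

/-- `L_X(G)` -/
def Lang (G : CFG N T) (X : N) : Set (List T) := LKY G ⊤ X none

/-- `L^{(k)}_X(G)` -/
def LangK (G : CFG N T) (k : ℕ) (X : N) : Set (List T) := LKY G (k : ℕ∞) X none

/-- `Γ^{df(k)}_{X,Y}(G)`: control words of `k`-index depth-first step sequences `X ⇒^γ u Y v`. -/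
def GammaDF (G : CFG N T) (k : ℕ) (X : N) (Y : Option N) : Set (List (CProd N T)) :=
  {γ | ∃ u v : List T, DFCtrlFrom G (k : ℕ∞) [Sum.inl X] γ (sent u Y v)}

/-- `L̂_{X,Y}(Γ, G)` -/
def LHat (G : CFG N T) (Γ : Set (List (CProd N T))) (X : N) (Y : Option N) : Set (List T) :=
  {w | ∃ u v, w = u ++ v ∧ ∃ γ ∈ Γ, CtrlSeq G ⊤ [Sum.inl X] γ (sent u Y v)}

/-- the language of the bounded expression `w₁* ⋯ w_d*` -/
def BLang {α : Type} : List (List α) → Set (List α)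
  | [] => {[]}
  | w :: ws => {u | ∃ (n : ℕ) (v : List α), v ∈ BLang ws ∧ u = (List.replicate n w).flatten ++ v}

/-- the words of a bounded expression must be nonempty -/
def IsBExpr {α : Type} (ws : List (List α)) : Prop := ∀ w ∈ ws, w ≠ []

/-- the language of the letter-bounded expression `a₁* ⋯ a_d*` -/
def letterLang {α : Type} (as : List α) : Set (List α) := BLang (as.map (fun a => [a]))

/-- the language `a_i* ⋯ a_j*` (0-indexed segment of `as` from `i` to `j` inclusive) -/
def segLang {α : Type} (as : List α) (i j : ℕ) : Set (List α) :=
  letterLang ((as.drop i).take (j - i + 1))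

end Paper

namespace Paper

variable {N T : Type}

/-- ranked words over the nonterminals -/
abbrev RW (N : Type) := List (N × ℕ)

/-- the set of rank values is downward closed (equivalently, of the form `{0, …, m}`
when nonempty) -/
def contiguousRanks (q : RW N) : Prop := ∀ p ∈ q, ∀ j ≤ p.2, ∃ x : N, (x, j) ∈ q

/-- vertices of the graph `A^{df(k)}_G` -/
def IsVertex (k : ℕ) (q : RW N) : Prop :=
  q.length ≤ k ∧ contiguousRanks q ∧ List.Pairwise (· ≤ ·) (q.map Prod.snd)

/-- `w↓Ξ` : projection of a word to its nonterminals -/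
def ntProj (w : Word N T) : List N := w.filterMap Sum.getLeft?

open Classical in
/-- the rank given to the nonterminals produced by a step rewriting a nonterminal
of maximal rank `i`, where `uv` is the rest of the ranked word -/
noncomputable def newRank (uv : RW N) (i : ℕ) : ℕ :=
  if uv = [] then 0 else if ∀ p ∈ uv, p.2 ≠ i then i else i + 1

/-- the edge relation of the graph `A^{df(k)}_G` -/
def Edge (G : CFG N T) (k : ℕ) (q : RW N) (p : CProd N T) (q' : RW N) : Prop :=
  p ∈ G.prods ∧ IsVertex k q ∧ IsVertex k q' ∧
  ∃ (u v : RW N) (i : ℕ), q = u ++ [(p.1, i)] ++ v ∧ (∀ x ∈ q, x.2 ≤ i) ∧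
    q' = u ++ v ++ (ntProj p.2).map (fun X => (X, newRank (u ++ v) i))

/-- paths in a labeled graph, recording the sequence of edge labels -/
inductive GPath {V E : Type} (edge : V → E → V → Prop) : V → List E → V → Prop
  | refl (v : V) : GPath edge v [] v
  | step {v v' v'' : V} {e : E} {es : List E} :
      edge v e v' → GPath edge v' es v'' → GPath edge v (e :: es) v''

/-- paths recording the successive vertices as well -/
inductive VPath {V E : Type} (edge : V → E → V → Prop) : V → List (E × V) → Prop
  | refl (v : V) : VPath edge v []
  | step {v v' : V} {e : E} {rest : List (E × V)} :
      edge v e v' → VPath edge v' rest → VPath edge v ((e, v') :: rest)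

/-- endpoint of a path starting at `q` -/
def pend {V E : Type} (q : V) (π : List (E × V)) : V := (π.map Prod.snd).getLastD q

/-- a path is acyclic iff it visits no vertex twice -/
def AcyclicFrom {V E : Type} (q : V) (π : List (E × V)) : Prop :=
  (q :: π.map Prod.snd).Nodup

/-- `Decomp edge q pairs fin` asserts that the path obtained by concatenating, in order,
the segments of `pairs` (each an acyclic segment followed by a cycle) and `fin` is a valid
path from `q`, alternating acyclic segments `ς_j` and cycles `θ_j`. -/
def Decomp {V E : Type} (edge : V → E → V → Prop) :
    V → List (List (E × V) × List (E × V)) → List (E × V) → Prop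
  | q, [], fin => VPath edge q fin ∧ AcyclicFrom q fin
  | q, (σ, θ) :: rest, fin =>
      VPath edge q σ ∧ AcyclicFrom q σ ∧
      VPath edge (pend q σ) θ ∧ pend (pend q σ) θ = pend q σ ∧
      Decomp edge (pend q σ) rest fin

/-- `|γ|_a`: total number of occurrences of the terminal `a` in the right-hand
sides of the productions of the control word `γ` -/
def projCnt {A : Type} [DecidableEq A] (γ : List (CProd N A)) (a : A) : ℕ :=
  ((γ.map (fun p => p.2)).flatten.filterMap Sum.getRight?).count a

/-- `proj(γ) = a₁^{|γ|_{a₁}} ⋯ a_s^{|γ|_{a_s}}` -/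
def projW {A : Type} [DecidableEq A] (as : List A) (γ : List (CProd N A)) : List A :=
  (as.map (fun a => List.replicate (projCnt γ a) a)).flatten

end Paper

namespace Paper

variable {N T : Type}

/-- a grammar is in 2-normal form -/
def TwoNF (G : CFG N T) : Prop := ∀ p ∈ G.prods, p.2.length ≤ 2

/-- states of the automaton/grammar `G^b`: `(s, i)` encodes `q^{(s+1)}_{i+1}`,
i.e. position `i` (0-indexed) inside the block `s` (0-indexed) -/
abbrev QB : Type := ℕ × ℕ

/-- `ℓ_s`: length of the `s`-th word of the bounded expression -/
def lenB (ws : List (List T)) (s : ℕ) : ℕ := (ws.getD s []).length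

/-- the `i`-th letter of the `s`-th word -/
def letterB (ws : List (List T)) (s i : ℕ) : Option T := (ws.getD s [])[i]?

/-- the productions of the grammar `G^b` generating the bounded expression `b` -/
def DeltaB (ws : List (List T)) : Set (CProd QB T) :=
  {p | (∃ s i a, s < ws.length ∧ i + 1 < lenB ws s ∧ letterB ws s i = some a ∧
          p = ((s, i), [Sum.inr a, Sum.inl (s, i + 1)]))
     ∨ (∃ s s' a, s ≤ s' ∧ s' < ws.length ∧
          letterB ws s (lenB ws s - 1) = some a ∧
          p = ((s, lenB ws s - 1), [Sum.inr a, Sum.inl (s', 0)]))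
     ∨ (∃ s, s < ws.length ∧ p = ((s, 0), ([] : Word QB T)))}

/-- the grammar `G^b` -/
def GB (ws : List (List T)) : CFG QB T := ⟨DeltaB ws⟩

/-- nonterminals `[q X q']` of the product grammar `G^∩` -/
abbrev NI (N : Type) : Type := QB × N × QB

/-- `q ∈ Ξ^b` -/
def ValidQ (ws : List (List T)) (q : QB) : Prop :=
  q.1 < ws.length ∧ q.2 < lenB ws q.1

/-- `[q X q'] ∈ Ξ^∩`: both states valid and blocks in order -/
def ValidNI (ws : List (List T)) (n : NI N) : Prop :=
  ValidQ ws n.1 ∧ ValidQ ws n.2.2 ∧ n.1.1 ≤ n.2.2.1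

/-- `q ⇒* w·q'` in `G^b` -/
def DerB (ws : List (List T)) (q : QB) (w : List T) (q' : QB) : Prop :=
  ∃ γ, CtrlSeq (GB ws) ⊤ [Sum.inl q] γ (tw w ++ [Sum.inl q'])

/-- the productions `Δ^∩` of the product grammar `G^∩` -/
def DeltaI (G : CFG N T) (ws : List (List T)) : Set (CProd (NI N) T) :=
  {pp | ∃ (q q' : QB) (X : N), ValidNI ws (q, X, q') ∧
     ((∃ w : List T, (X, tw w) ∈ G.prods ∧ DerB ws q w q' ∧
         pp = ((q, X, q'), tw w)) ∨
      (∃ Y : N, (X, [Sum.inl Y]) ∈ G.prods ∧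
         pp = ((q, X, q'), [Sum.inl ((q, Y, q') : NI N)])) ∨
      (∃ (a : T) (Y : N) (qm : QB), (X, [Sum.inr a, Sum.inl Y]) ∈ G.prods ∧
         ((q, [Sum.inr a, Sum.inl qm]) : CProd QB T) ∈ DeltaB ws ∧ ValidNI ws (qm, Y, q') ∧
         pp = ((q, X, q'), [Sum.inr a, Sum.inl ((qm, Y, q') : NI N)])) ∨
      (∃ (a : T) (Y : N) (qm : QB), (X, [Sum.inl Y, Sum.inr a]) ∈ G.prods ∧
         ((qm, [Sum.inr a, Sum.inl q']) : CProd QB T) ∈ DeltaB ws ∧ ValidNI ws (q, Y, qm) ∧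
         pp = ((q, X, q'), [Sum.inl ((q, Y, qm) : NI N), Sum.inr a])) ∨
      (∃ (Y Z : N) (qm : QB), (X, [Sum.inl Y, Sum.inl Z]) ∈ G.prods ∧
         ValidNI ws (q, Y, qm) ∧ ValidNI ws (qm, Z, q') ∧
         pp = ((q, X, q'), [Sum.inl ((q, Y, qm) : NI N), Sum.inl ((qm, Z, q') : NI N)])))}

/-- the product grammar `G^∩` -/
def GI (G : CFG N T) (ws : List (List T)) : CFG (NI N) T := ⟨DeltaI G ws⟩

/-- `ζ` on symbols -/
def zetaS : (NI N ⊕ T) → (N ⊕ T) := Sum.map (fun n => n.2.1) id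

/-- `ζ` on productions -/
def zetaP (p : CProd (NI N) T) : CProd N T := (p.1.2.1, p.2.map zetaS)

/-- `ζ` on control words -/
def zetaC (γ : List (CProd (NI N) T)) : List (CProd N T) := γ.map zetaP

/-- the intermediate state of the (unique, shortest) two-step run of `G^b` from the
left state of `h` to its right state; when the first step wraps, the least possible
intermediate block is chosen -/
noncomputable def iotaMid (ws : List (List T)) (h : NI N) (a b : T) : QB :=
  if h.1.2 + 1 < lenB ws h.1.1 then (h.1.1, h.1.2 + 1)
  else (sInf {y : ℕ | (((h.1.1, h.1.2), [Sum.inr a, Sum.inl ((y, 0) : QB)]) : CProd QB T) ∈ DeltaB ws ∧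
                (((y, 0), [Sum.inr b, Sum.inl (h.2.2 : QB)]) : CProd QB T) ∈ DeltaB ws}, 0)

/-- `ι` on right-hand sides: relabels terminals by the indices (0-indexed) of the
blocks of `b` completed by the corresponding moves of `G^b`; `h` is the head of the
production -/
noncomputable def iotaRhs (ws : List (List T)) (h : NI N) :
    Word (NI N) T → Word (NI N) ℕ
  | [] => []
  | [Sum.inr _] => if h.2.2.2 = 0 then [Sum.inr h.1.1] else []
  | [Sum.inr a, Sum.inr b] =>
      (if (iotaMid ws h a b).2 = 0 then [Sum.inr h.1.1] else []) ++
      (if h.2.2.2 = 0 then [Sum.inr (iotaMid ws h a b).1] else [])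
  | [Sum.inr _, Sum.inl m] => (if m.1.2 = 0 then [Sum.inr h.1.1] else []) ++ [Sum.inl m]
  | [Sum.inl m, Sum.inr _] => [Sum.inl m] ++ (if h.2.2.2 = 0 then [Sum.inr m.2.2.1] else [])
  | other => other.map (Sum.map id (fun _ => 0))

/-- the map `ι : Δ^∩ → Δ^⋈` -/
noncomputable def iota (ws : List (List T)) (p : CProd (NI N) T) : CProd (NI N) ℕ :=
  (p.1, iotaRhs ws p.1 p.2)

/-- the grammar `G^⋈`, whose terminals are the (0-indexed) letters `a₁, …, a_d`
represented by natural numbers -/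
noncomputable def GBow (G : CFG N T) (ws : List (List T)) : CFG (NI N) ℕ :=
  ⟨iota ws '' DeltaI G ws⟩

end Paper

namespace Paper

variable {N A : Type}

/-- `Ξ̂`: nonterminals producing some word starting with `a₁` and some word ending
with `a_d` -/
def XiHat (G : CFG N A) (a1 ad : A) : Set N :=
  {Y | (∃ w ∈ Lang G Y, ∃ v, w = a1 :: v) ∧ (∃ w ∈ Lang G Y, ∃ v, w = v ++ [ad])}

/-- the grammar `G^♯` (here `S = Ξ̂`, and `Ξ̌` is its complement) -/
def GSharp (G : CFG N A) (S : Set N) : CFG N A :=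
  ⟨{p | p ∈ G.prods ∧ p.1 ∉ S} ∪
   {p | p ∈ G.prods ∧ p.1 ∈ S ∧ ∃ (u : Word N A) (Xr : N) (v : Word N A),
      Xr ∈ S ∧ p.2 = u ++ [Sum.inl Xr] ++ v}⟩

/-- the grammar `G_{i,w}` for a pivot production `piv` (here `S = Ξ̂`) -/
def GPivot (G : CFG N A) (S : Set N) (piv : CProd N A) : CFG N A :=
  ⟨{p | p ∈ G.prods ∧ p.1 ∉ S} ∪ {piv}⟩

/-- `G` is reduced for `X` -/
def Reduced (G : CFG N A) (X : N) : Prop :=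
  ∀ Y : N, Y ≠ X → (LKY G ⊤ X (some Y)).Nonempty ∧ (Lang G Y).Nonempty

/-- `a₁* ⋯ a_d*` (given by the list `as`) is the minimal strict letter-bounded
expression for `L_X(G)` -/
def MinimalLB (G : CFG N A) (X : N) (as : List A) : Prop :=
  Lang G X ⊆ letterLang as ∧ ∀ i < as.length, ¬ (Lang G X ⊆ letterLang (as.eraseIdx i))

/-- a symbol of `A ∪ {ε}` as a word -/
def optT (a : Option A) : Word N A := a.elim [] (fun x => [Sum.inr x])

/-- a symbol of `Ξ ∪ {ε}` as a word -/
def optN (y : Option N) : Word N A := y.elim [] (fun x => [Sum.inl x])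

/-- `y ⇒^γ u_y` is a (possibly empty) `k`-index depth-first derivation, where
`y ∈ Ξ ∪ {ε}`; for `y = ε` the derivation is empty -/
def optDFDer (H : CFG N A) (k : ℕ) (y : Option N) (γ : List (CProd N A)) : Prop :=
  match y with
  | some Y => ∃ w : List A, DFCtrlFrom H (k : ℕ∞) [Sum.inl Y] γ (tw w)
  | none => γ = []

/-- the grammar `G_k` with productions `X_i → X_{i-1} X_{i-1}` (1 ≤ i ≤ k) and `X_0 → a` -/
def Gk (k : ℕ) : CFG ℕ Unit :=
  ⟨{p | (∃ i, 1 ≤ i ∧ i ≤ k ∧ p = (i, [Sum.inl (i - 1), Sum.inl (i - 1)])) ∨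
        p = (0, [Sum.inr ()])}⟩

end Paper

namespace Paper

/-!
`G^∩` and `G^⋈` have the same nonterminals and `ι` only relabels terminals, so sentential forms
of the two grammars can be aligned: a form of `G^⋈` is a form of `G^∩` in which every terminal is
replaced by the index of the block of `b` that `G^b` completes on reading it, or erased when no
block is completed. Each production of `G^∩` aligns its right-hand side with that of its
`ι`-image, so derivations transfer in both directions along `ι`, preserving the alignment and
the index. A run of `G^b` from `q^{(s)}_1` to `q^{(x)}_1` reads exactly the concatenation of the
blocks it completes, so the terminal word of `G^∩` is recovered from its image under the
alignment: pulling back a controlled derivation of the image yields the original word.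
-/

variable {N T : Type}

section Words

theorem ntCount_cons_inl (n : N) (u : Word N T) : ntCount (Sum.inl n :: u) = ntCount u + 1 := by
  simp [ntCount, List.filter_cons]

theorem ntCount_cons_inr (a : T) (u : Word N T) : ntCount (Sum.inr a :: u) = ntCount u := by
  simp [ntCount]

theorem ntCount_tw (t : List T) : ntCount (tw t : Word N T) = 0 := by
  simp [ntCount, tw, List.filter_map]

theorem exists_eq_tw_of_ntCount_eq_zero : ∀ {u : Word N T}, ntCount u = 0 → ∃ t, u = tw t
  | [], _ => ⟨[], rfl⟩
  | Sum.inl n :: u, h => by simp [ntCount_cons_inl] at h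
  | Sum.inr a :: u, h => by
    obtain ⟨t, rfl⟩ := exists_eq_tw_of_ntCount_eq_zero (by rwa [ntCount_cons_inr] at h)
    exact ⟨a :: t, rfl⟩

theorem tw_eq_inr_cons_iff {t : List T} {a : T} {u : Word N T} :
    tw t = Sum.inr a :: u ↔ ∃ t₀, t = a :: t₀ ∧ u = tw t₀ := by
  cases t with
  | nil => simp [tw]
  | cons b t =>
    simp only [tw, List.map_cons, List.cons.injEq, Sum.inr.injEq, eq_comm]
    exact ⟨fun ⟨hab, hu⟩ => ⟨t, ⟨hab, rfl⟩, hu⟩, fun ⟨_, ⟨hab, rfl⟩, hu⟩ => ⟨hab, hu⟩⟩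

theorem sent_none (u v : List T) : (sent u none v : Word N T) = tw (u ++ v) := by
  simp [sent, tw]

theorem applyProd_append_cons (p : CProd N T) {l r : Word N T} {x : N ⊕ T} {j : ℕ}
    (hj : l.length = j) : applyProd p j (l ++ x :: r) = l ++ p.2 ++ r := by
  subst hj
  simp [applyProd]

theorem exists_append_cons_of_getElem?_eq_some {α : Type*} {u : List α} {j : ℕ} {x : α}
    (h : u[j]? = some x) : ∃ l r, u = l ++ x :: r ∧ l.length = j := by
  obtain ⟨hj, rfl⟩ := List.getElem?_eq_some_iff.1 h
  exact ⟨u.take j, u.drop (j + 1), by rw [← List.drop_eq_getElem_cons hj, List.take_append_drop],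
    by simp; omega⟩

theorem getElem?_tw_append_singleton_eq_inl {t : List T} {x : N ⊕ T} {j : ℕ} {n : N}
    (h : (tw t ++ [x])[j]? = some (Sum.inl n)) : j = t.length ∧ x = Sum.inl n := by
  rcases lt_or_ge j t.length with hj | hj
  · rw [List.getElem?_append_left (by simpa [tw] using hj)] at h
    simp [tw] at h
  · rw [List.getElem?_append_right (by simpa [tw] using hj)] at h
    simp only [tw, List.length_map, List.getElem?_singleton, Option.ite_none_right_eq_some,
      Option.some.injEq] at h
    exact ⟨by omega, h.2⟩

end Words

theorem KSeq.eq_of_tw {G : CFG N T} {k : ℕ∞} {t : List T} {pjs : List (CProd N T × ℕ)}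
    {v : Word N T} (h : KSeq G k (tw t) pjs v) : v = tw t := by
  cases h with
  | refl => rfl
  | step _ _ hj => simp [tw] at hj

section AutomatonB

variable {ws : List (List T)}

def TransB (ws : List (List T)) (q : QB) (a : T) (q' : QB) : Prop :=
  ((q, [Sum.inr a, Sum.inl q']) : CProd QB T) ∈ DeltaB ws

inductive RunB (ws : List (List T)) : QB → List T → QB → Prop
  | nil (q : QB) : RunB ws q [] q
  | cons {q qm q' : QB} {a : T} {w : List T} :
      TransB ws q a qm → RunB ws qm w q' → RunB ws q (a :: w) q'

theorem rhs_eq_nil_or_transB {p : CProd QB T} (hp : p ∈ DeltaB ws) :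
    p.2 = [] ∨ ∃ a qm, p.2 = [Sum.inr a, Sum.inl qm] ∧ TransB ws p.1 a qm := by
  have hmem := hp
  rcases hp with ⟨_, _, a, _, _, _, rfl⟩ | ⟨_, _, a, _, _, _, rfl⟩ | ⟨_, _, rfl⟩
  · exact Or.inr ⟨a, _, rfl, hmem⟩
  · exact Or.inr ⟨a, _, rfl, hmem⟩
  · exact Or.inl rfl

theorem TransB.letterB_eq {q q' : QB} {a : T} (h : TransB ws q a q') :
    letterB ws q.1 q.2 = some a := by
  rcases h with ⟨_, _, _, _, _, hl, he⟩ | ⟨_, _, _, _, _, hl, he⟩ | ⟨_, _, he⟩ <;>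
    simp only [Prod.mk.injEq, List.cons.injEq, Sum.inr.injEq, reduceCtorEq, and_false] at he
  · obtain ⟨rfl, rfl, -⟩ := he; exact hl
  · obtain ⟨rfl, rfl, -⟩ := he; exact hl

theorem TransB.next_or_wrap {q q' : QB} {a : T} (h : TransB ws q a q') :
    (q.2 + 1 < lenB ws q.1 ∧ q' = (q.1, q.2 + 1)) ∨ (¬ q.2 + 1 < lenB ws q.1 ∧ q'.2 = 0) := by
  have hlt := (List.getElem?_eq_some_iff.1 h.letterB_eq).1
  rcases h with ⟨_, _, _, _, hi, _, he⟩ | ⟨_, _, _, _, _, _, he⟩ | ⟨_, _, he⟩ <;>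
    simp only [Prod.mk.injEq, List.cons.injEq, Sum.inr.injEq, Sum.inl.injEq, reduceCtorEq,
      and_false] at he
  · obtain ⟨rfl, -, rfl, -⟩ := he; exact Or.inl ⟨hi, rfl⟩
  · obtain ⟨rfl, -, rfl, -⟩ := he
    dsimp only [lenB] at hlt ⊢
    exact Or.inr ⟨by omega, rfl⟩

theorem TransB.take_append {q q' : QB} {a : T} (h : TransB ws q a q') :
    (ws.getD q.1 []).take q.2 ++ [a] = (ws.getD q.1 []).take (q.2 + 1) := by
  rw [List.take_add_one, ← letterB, h.letterB_eq, Option.toList_some]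

theorem KSeq.runB {k : ℕ∞} {u v : Word QB T} {pjs : List (CProd QB T × ℕ)}
    (h : KSeq (GB ws) k u pjs v) {t : List T} {q : QB} (hu : u = tw t ++ [Sum.inl q])
    {w : List T} {q' : QB} (hv : v = tw w ++ [Sum.inl q']) :
    ∃ w₂, w = t ++ w₂ ∧ RunB ws q w₂ q' := by
  induction h generalizing t q with
  | refl u =>
    subst hu
    obtain ⟨htw, hq⟩ := List.append_inj' hv rfl
    obtain rfl := List.map_injective_iff.2 Sum.inr_injective htw
    obtain rfl : q = q' := by simpa using hq
    exact ⟨[], by simp, .nil q⟩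
  | @step _ _ p j _ _ hp hj hrest ih =>
    subst hu
    obtain ⟨rfl, hq⟩ := getElem?_tw_append_singleton_eq_inl hj
    obtain rfl : q = p.1 := Sum.inl_injective hq
    have happ : applyProd p t.length (tw t ++ [Sum.inl p.1]) = tw t ++ p.2 := by
      rw [applyProd_append_cons p (by simp [tw]), List.append_nil]
    rw [happ] at hrest
    rcases rhs_eq_nil_or_transB hp with h0 | ⟨a, qm, h2, htr⟩
    · have : Sum.inl q' ∈ (tw t : Word QB T) := by
        rw [h0, List.append_nil] at hrest
        rw [← hrest.eq_of_tw, hv]; simp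
      simp [tw] at this
    · obtain ⟨w₂, rfl, hrun⟩ := ih (t := t ++ [a]) (q := qm) (by rw [happ, h2]; simp [tw]) hv
      exact ⟨a :: w₂, by simp, .cons htr hrun⟩

theorem DerB.runB {q q' : QB} {w : List T} (h : DerB ws q w q') : RunB ws q w q' := by
  obtain ⟨γ, js, -, hK⟩ := h
  obtain ⟨w₂, rfl, hrun⟩ := hK.runB (t := []) rfl rfl
  exact hrun

end AutomatonB

theorem transB_iotaMid {ws : List (List T)} {q qm q' : QB} {a b : T} (Y : N)
    (h₁ : TransB ws q a qm) (h₂ : TransB ws qm b q') :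
    TransB ws q a (iotaMid ws (q, Y, q') a b) ∧ TransB ws (iotaMid ws (q, Y, q') a b) b q' := by
  unfold iotaMid
  split_ifs with hlt
  · obtain ⟨-, rfl⟩ := h₁.next_or_wrap.resolve_right (fun h => h.1 hlt)
    exact ⟨h₁, h₂⟩
  · obtain ⟨y, z⟩ := qm
    obtain rfl : z = 0 := (h₁.next_or_wrap.resolve_left (fun h => hlt h.1)).2
    exact Nat.sInf_mem (s := {y | TransB ws q a (y, 0) ∧ TransB ws (y, 0) b q'}) ⟨y, h₁, h₂⟩

/-- `Aligned ws q u u' q'`: along `u`, a run of `G^b` leads from `q` to `q'`, where a nonterminal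
`[q₁ Y q₂]` jumps from `q₁` to `q₂`; `u'` keeps the nonterminals of `u` and replaces each terminal
by the index of the block completed when `G^b` reads it, if any. -/
inductive Aligned (ws : List (List T)) : QB → Word (NI N) T → Word (NI N) ℕ → QB → Prop
  | nil (q : QB) : Aligned ws q [] [] q
  | skip {q q₂ q' : QB} {a : T} {u : Word (NI N) T} {u' : Word (NI N) ℕ} :
      TransB ws q a q₂ → q₂.2 ≠ 0 → Aligned ws q₂ u u' q' → Aligned ws q (Sum.inr a :: u) u' q'
  | jump {q q₂ q' : QB} {a : T} {u : Word (NI N) T} {u' : Word (NI N) ℕ} :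
      TransB ws q a q₂ → q₂.2 = 0 → Aligned ws q₂ u u' q' →
      Aligned ws q (Sum.inr a :: u) (Sum.inr q.1 :: u') q'
  | nonterm {n : NI N} {q' : QB} {u : Word (NI N) T} {u' : Word (NI N) ℕ} :
      Aligned ws n.2.2 u u' q' → Aligned ws n.1 (Sum.inl n :: u) (Sum.inl n :: u') q'

namespace Aligned

variable {ws : List (List T)} {q q' q₂ : QB}

theorem read {a : T} {u : Word (NI N) T} {u' : Word (NI N) ℕ} (h : TransB ws q a q₂)
    (ha : Aligned ws q₂ u u' q') :
    Aligned ws q (Sum.inr a :: u) ((if q₂.2 = 0 then [Sum.inr q.1] else []) ++ u') q' := by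
  split_ifs with hz
  · exact .jump h hz ha
  · exact .skip h hz ha

theorem append {qm : QB} {u r : Word (NI N) T} {u' r' : Word (NI N) ℕ}
    (h₁ : Aligned ws q u u' qm) (h₂ : Aligned ws qm r r' q') :
    Aligned ws q (u ++ r) (u' ++ r') q' := by
  induction h₁ with
  | nil => exact h₂
  | skip htr hz _ ih => exact .skip htr hz (ih h₂)
  | jump htr hz _ ih => exact .jump htr hz (ih h₂)
  | nonterm _ ih => exact .nonterm (ih h₂)

theorem ntCount_eq {u : Word (NI N) T} {u' : Word (NI N) ℕ} (h : Aligned ws q u u' q') :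
    ntCount u = ntCount u' := by
  induction h with
  | nil => rfl
  | skip _ _ _ ih => rwa [ntCount_cons_inr]
  | jump _ _ _ ih => rw [ntCount_cons_inr, ntCount_cons_inr, ih]
  | nonterm _ ih => rw [ntCount_cons_inl, ntCount_cons_inl, ih]

theorem exists_eq_tw_right {t : List T} {u' : Word (NI N) ℕ} (h : Aligned ws q (tw t) u' q') :
    ∃ e, u' = tw e :=
  exists_eq_tw_of_ntCount_eq_zero (h.ntCount_eq ▸ ntCount_tw t)

theorem exists_eq_tw_left {u : Word (NI N) T} {e : List ℕ} (h : Aligned ws q u (tw e) q') :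
    ∃ t, u = tw t :=
  exists_eq_tw_of_ntCount_eq_zero (h.ntCount_eq.trans (ntCount_tw e))

theorem exists_split_left {u : Word (NI N) T} {u' : Word (NI N) ℕ} (h : Aligned ws q u u' q₂)
    {l r : Word (NI N) T} {n : NI N} (hu : u = l ++ Sum.inl n :: r) :
    ∃ l' r', u' = l' ++ Sum.inl n :: r' ∧ Aligned ws q l l' n.1 ∧ Aligned ws n.2.2 r r' q₂ := by
  induction h generalizing l with
  | nil => simp at hu
  | skip htr hz _ ih =>
    rcases List.cons_eq_append_iff.1 hu with ⟨-, h⟩ | ⟨l, rfl, hrest⟩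
    · simp at h
    · obtain ⟨l', r', rfl, hl, hr⟩ := ih hrest
      exact ⟨l', r', rfl, .skip htr hz hl, hr⟩
  | jump htr hz _ ih =>
    rcases List.cons_eq_append_iff.1 hu with ⟨-, h⟩ | ⟨l, rfl, hrest⟩
    · simp at h
    · obtain ⟨l', r', rfl, hl, hr⟩ := ih hrest
      exact ⟨_ :: l', r', rfl, .jump htr hz hl, hr⟩
  | nonterm ha ih =>
    rcases List.cons_eq_append_iff.1 hu with ⟨rfl, h⟩ | ⟨l, rfl, hrest⟩
    · simp only [List.cons.injEq, Sum.inl.injEq] at h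
      obtain ⟨rfl, rfl⟩ := h
      exact ⟨[], _, rfl, .nil _, ha⟩
    · obtain ⟨l', r', rfl, hl, hr⟩ := ih hrest
      exact ⟨_ :: l', r', rfl, .nonterm hl, hr⟩

theorem exists_split_right {u : Word (NI N) T} {u' : Word (NI N) ℕ} (h : Aligned ws q u u' q₂)
    {l' r' : Word (NI N) ℕ} {n : NI N} (hu' : u' = l' ++ Sum.inl n :: r') :
    ∃ l r, u = l ++ Sum.inl n :: r ∧ Aligned ws q l l' n.1 ∧ Aligned ws n.2.2 r r' q₂ := by
  induction h generalizing l' with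
  | nil => simp at hu'
  | skip htr hz _ ih =>
    obtain ⟨l, r, rfl, hl, hr⟩ := ih hu'
    exact ⟨_ :: l, r, rfl, .skip htr hz hl, hr⟩
  | jump htr hz _ ih =>
    rcases List.cons_eq_append_iff.1 hu' with ⟨-, h⟩ | ⟨l', rfl, hrest⟩
    · simp at h
    · obtain ⟨l, r, rfl, hl, hr⟩ := ih hrest
      exact ⟨_ :: l, r, rfl, .jump htr hz hl, hr⟩
  | nonterm ha ih =>
    rcases List.cons_eq_append_iff.1 hu' with ⟨rfl, h⟩ | ⟨l', rfl, hrest⟩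
    · simp only [List.cons.injEq, Sum.inl.injEq] at h
      obtain ⟨rfl, rfl⟩ := h
      exact ⟨[], _, rfl, .nil _, ha⟩
    · obtain ⟨l, r, rfl, hl, hr⟩ := ih hrest
      exact ⟨_ :: l, r, rfl, .nonterm hl, hr⟩

theorem applyProd_left {u : Word (NI N) T} {u' : Word (NI N) ℕ} (h : Aligned ws q u u' q₂)
    {j : ℕ} {n : NI N} (hj : u[j]? = some (Sum.inl n)) :
    ∃ j', u'[j']? = some (Sum.inl n) ∧
      ∀ (p : CProd (NI N) T) (p' : CProd (NI N) ℕ), Aligned ws n.1 p.2 p'.2 n.2.2 →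
        Aligned ws q (applyProd p j u) (applyProd p' j' u') q₂ := by
  obtain ⟨l, r, rfl, rfl⟩ := exists_append_cons_of_getElem?_eq_some hj
  obtain ⟨l', r', rfl, hl, hr⟩ := h.exists_split_left rfl
  refine ⟨l'.length, by simp, fun p p' hp => ?_⟩
  rw [applyProd_append_cons p rfl, applyProd_append_cons p' rfl, List.append_assoc,
    List.append_assoc]
  exact hl.append (hp.append hr)

theorem applyProd_right {u : Word (NI N) T} {u' : Word (NI N) ℕ} (h : Aligned ws q u u' q₂)
    {j : ℕ} {n : NI N} (hj : u'[j]? = some (Sum.inl n)) :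
    ∃ j', u[j']? = some (Sum.inl n) ∧
      ∀ (p : CProd (NI N) T) (p' : CProd (NI N) ℕ), Aligned ws n.1 p.2 p'.2 n.2.2 →
        Aligned ws q (applyProd p j' u) (applyProd p' j u') q₂ := by
  obtain ⟨l', r', rfl, rfl⟩ := exists_append_cons_of_getElem?_eq_some hj
  obtain ⟨l, r, rfl, hl, hr⟩ := h.exists_split_right rfl
  refine ⟨l.length, by simp, fun p p' hp => ?_⟩
  rw [applyProd_append_cons p rfl, applyProd_append_cons p' rfl, List.append_assoc,
    List.append_assoc]
  exact hl.append (hp.append hr)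

/-- `(ws.getD q.1 []).take q.2` is the part of block `q.1` already read on reaching `q`. -/
theorem take_append_eq {u : Word (NI N) T} {u' : Word (NI N) ℕ} (h : Aligned ws q u u' q')
    {t : List T} {e : List ℕ} (ht : u = tw t) (he : u' = tw e) :
    (ws.getD q.1 []).take q.2 ++ t =
      (e.map (ws.getD · [])).flatten ++ (ws.getD q'.1 []).take q'.2 := by
  induction h generalizing t e with
  | nil q =>
    obtain rfl : t = [] := by simpa [tw] using ht.symm
    obtain rfl : e = [] := by simpa [tw] using he.symm
    simp
  | skip htr hz _ ih =>
    obtain ⟨t, rfl, rfl⟩ := tw_eq_inr_cons_iff.1 ht.symm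
    obtain ⟨-, rfl⟩ := htr.next_or_wrap.resolve_right (fun h => hz h.2)
    rw [← ih rfl he, ← htr.take_append, List.append_assoc, List.singleton_append]
  | @jump q q₂ _ a _ _ htr hz _ ih =>
    obtain ⟨t, rfl, rfl⟩ := tw_eq_inr_cons_iff.1 ht.symm
    obtain ⟨e, rfl, rfl⟩ := tw_eq_inr_cons_iff.1 he.symm
    obtain ⟨hlt, -⟩ := htr.next_or_wrap.resolve_left (fun h => by simp [h.2] at hz)
    have hblock : (ws.getD q.1 []).take (q.2 + 1) = ws.getD q.1 [] :=
      List.take_of_length_le (by unfold lenB at hlt; omega)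
    have hrest := ih rfl rfl
    rw [hz, List.take_zero, List.nil_append] at hrest
    calc (ws.getD q.1 []).take q.2 ++ a :: t = ((ws.getD q.1 []).take q.2 ++ [a]) ++ t := by simp
      _ = ws.getD q.1 [] ++ t := by rw [htr.take_append, hblock]
      _ = _ := by simp [hrest]
  | nonterm =>
    cases t <;> simp [tw] at ht

theorem eq_flatten {s x : ℕ} {t : List T} {e : List ℕ}
    (h : Aligned ws (s, 0) (tw t : Word (NI N) T) (tw e) (x, 0)) :
    t = (e.map (ws.getD · [])).flatten := by
  simpa using h.take_append_eq rfl rfl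

end Aligned

section Simulation

variable {ws : List (List T)}

theorem aligned_iotaRhs_of_derB {q q' : QB} {w : List T} (X : N) (hw : w.length ≤ 2)
    (h : DerB ws q w q') : Aligned ws q (tw w) (iotaRhs ws (q, X, q') (tw w)) q' := by
  have hrun := h.runB
  match w, hw, hrun with
  | [], _, .nil _ => exact .nil q
  | [a], _, .cons h₁ (.nil _) =>
    show Aligned ws q [Sum.inr a] (if q'.2 = 0 then [Sum.inr q.1] else []) q'
    simpa only [List.append_nil] using (Aligned.nil q').read h₁
  | [a, b], _, .cons h₁ (.cons h₂ (.nil _)) =>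
    obtain ⟨h₁, h₂⟩ := transB_iotaMid X h₁ h₂
    show Aligned ws q [Sum.inr a, Sum.inr b]
      ((if (iotaMid ws (q, X, q') a b).2 = 0 then [Sum.inr q.1] else []) ++
        (if q'.2 = 0 then [Sum.inr (iotaMid ws (q, X, q') a b).1] else [])) q'
    simpa only [List.append_nil] using ((Aligned.nil q').read h₂).read h₁

theorem aligned_iotaRhs {G : CFG N T} (h2NF : TwoNF G) {p : CProd (NI N) T}
    (hp : p ∈ DeltaI G ws) : Aligned ws p.1.1 p.2 (iotaRhs ws p.1 p.2) p.1.2.2 := by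
  obtain ⟨q, q', X, -, hc⟩ := hp
  rcases hc with ⟨w, hw, hder, rfl⟩ | ⟨Y, -, rfl⟩ | ⟨a, Y, qm, -, hB, -, rfl⟩ |
    ⟨a, Y, qm, -, hB, -, rfl⟩ | ⟨Y, Z, qm, -, -, -, rfl⟩
  · exact aligned_iotaRhs_of_derB X (by simpa [tw] using h2NF _ hw) hder
  · exact .nonterm (n := (q, Y, q')) (.nil q')
  · exact Aligned.read hB (.nonterm (n := (qm, Y, q')) (.nil q'))
  · show Aligned ws q _ (Sum.inl (q, Y, qm) :: if q'.2 = 0 then [Sum.inr qm.1] else []) q'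
    have h := Aligned.nonterm (n := (q, Y, qm)) (Aligned.read hB (.nil q'))
    simpa only [List.append_nil] using h
  · exact .nonterm (n := (q, Y, qm)) (.nonterm (n := (qm, Z, q')) (.nil q'))

theorem KSeq.exists_GBow_aligned {G : CFG N T} (h2NF : TwoNF G) {k : ℕ∞} {u v : Word (NI N) T}
    {δjs : List (CProd (NI N) T × ℕ)} (h : KSeq (GI G ws) k u δjs v) {q q₂ : QB}
    {u' : Word (NI N) ℕ} (ha : Aligned ws q u u' q₂) :
    ∃ pjs v', KSeq (GBow G ws) k u' pjs v' ∧ Aligned ws q v v' q₂ := by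
  induction h generalizing u' with
  | refl u hu => exact ⟨[], u', .refl u' (ha.ntCount_eq ▸ hu), ha⟩
  | step hu hp hj _ ih =>
    obtain ⟨j', hj', hrepl⟩ := ha.applyProd_left hj
    obtain ⟨pjs, v', hK, hv⟩ := ih (hrepl _ (iota ws _) (aligned_iotaRhs h2NF hp))
    exact ⟨_, v', .step (ha.ntCount_eq ▸ hu) ⟨_, hp, rfl⟩ hj' hK, hv⟩

theorem KSeq.exists_GI_aligned {G : CFG N T} (h2NF : TwoNF G) {k : ℕ∞} {u' v' : Word (NI N) ℕ}
    {pjs : List (CProd (NI N) ℕ × ℕ)} (h : KSeq (GBow G ws) k u' pjs v') {q q₂ : QB}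
    {u : Word (NI N) T} (ha : Aligned ws q u u' q₂) :
    ∃ δjs v, KSeq (GI G ws) k u δjs v ∧ δjs.map (fun d => iota ws d.1) = pjs.map Prod.fst ∧
      Aligned ws q v v' q₂ := by
  induction h generalizing u with
  | refl u' hu => exact ⟨[], u, .refl u (ha.ntCount_eq ▸ hu), rfl, ha⟩
  | step hu hp hj _ ih =>
    obtain ⟨p, hp, rfl⟩ := hp
    obtain ⟨j', hj', hrepl⟩ := ha.applyProd_right hj
    obtain ⟨δjs, v, hK, hmap, hv⟩ := ih (hrepl p _ (aligned_iotaRhs h2NF hp))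
    exact ⟨(p, j') :: δjs, v, .step (ha.ntCount_eq ▸ hu) hp hj' hK, by simp [hmap], hv⟩

end Simulation

section Languages

variable {G : CFG N T} {k : ℕ∞} {X : N}

theorem ctrlSeq_iff_exists_kSeq {u v : Word N T} {γ : List (CProd N T)} :
    CtrlSeq G k u γ v ↔ ∃ pjs : List (CProd N T × ℕ), pjs.map Prod.fst = γ ∧ KSeq G k u pjs v := by
  constructor
  · rintro ⟨js, hlen, hK⟩
    exact ⟨γ.zip js, List.map_fst_zip hlen.ge, hK⟩
  · rintro ⟨pjs, rfl, hK⟩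
    refine ⟨pjs.unzip.2, by simp, ?_⟩
    rwa [← List.unzip_fst, List.zip_unzip]

theorem mem_LKY_none_iff {w : List T} :
    w ∈ LKY G k X none ↔ ∃ γ, CtrlSeq G k [Sum.inl X] γ (tw w) := by
  constructor
  · rintro ⟨u, v, γ, rfl, hγ⟩
    exact ⟨γ, by rwa [sent_none] at hγ⟩
  · rintro ⟨γ, hγ⟩
    exact ⟨w, [], γ, by simp, by rwa [sent_none, List.append_nil]⟩

theorem mem_LHat_none_iff {Γ : Set (List (CProd N T))} {w : List T} :
    w ∈ LHat G Γ X none ↔ ∃ γ ∈ Γ, CtrlSeq G ⊤ [Sum.inl X] γ (tw w) := by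
  constructor
  · rintro ⟨u, v, rfl, γ, hΓ, hγ⟩
    exact ⟨γ, hΓ, by rwa [sent_none] at hγ⟩
  · rintro ⟨γ, hΓ, hγ⟩
    exact ⟨w, [], by simp, γ, hΓ, by rwa [sent_none, List.append_nil]⟩

end Languages

theorem control_set_transfer_general {N T : Type} (G : CFG N T) (h2NF : TwoNF G)
    (ws : List (List T)) (X : N) (s x : ℕ) (k : ℕ)
    (Γ : Set (List (CProd (NI N) ℕ)))
    (hcov : LangK (GBow G ws) k (((s, 0), X, (x, 0)) : NI N) ⊆
        LHat (GBow G ws) Γ (((s, 0), X, (x, 0)) : NI N) none) :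
    LangK (GI G ws) k (((s, 0), X, (x, 0)) : NI N) ⊆
      LHat (GI G ws) {δ | δ.map (iota ws) ∈ Γ} (((s, 0), X, (x, 0)) : NI N) none := by
  intro w hw
  have hstart : Aligned ws (s, 0) [Sum.inl (((s, 0), X, (x, 0)) : NI N)]
      [Sum.inl (((s, 0), X, (x, 0)) : NI N)] (x, 0) := .nonterm (n := ((s, 0), X, (x, 0))) (.nil _)
  obtain ⟨γ, hγ⟩ := mem_LKY_none_iff.1 hw
  obtain ⟨δjs, -, hK⟩ := ctrlSeq_iff_exists_kSeq.1 hγ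
  obtain ⟨pjs, _, hK', hw'⟩ := hK.exists_GBow_aligned h2NF hstart
  obtain ⟨e, rfl⟩ := hw'.exists_eq_tw_right
  obtain ⟨γ', hγ'Γ, hγ'⟩ := mem_LHat_none_iff.1
    (hcov (mem_LKY_none_iff.2 ⟨_, ctrlSeq_iff_exists_kSeq.2 ⟨pjs, rfl, hK'⟩⟩))
  obtain ⟨pjs', rfl, hK₂⟩ := ctrlSeq_iff_exists_kSeq.1 hγ'
  obtain ⟨δjs', _, hK₃, hmap, hv⟩ := hK₂.exists_GI_aligned h2NF hstart
  obtain ⟨t, rfl⟩ := hv.exists_eq_tw_left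
  obtain rfl : t = w := hv.eq_flatten.trans hw'.eq_flatten.symm
  refine mem_LHat_none_iff.2 ⟨_, ?_, ctrlSeq_iff_exists_kSeq.2 ⟨δjs', rfl, hK₃⟩⟩
  simpa [List.map_map, Function.comp_def, hmap] using hγ'Γ

/-- Lemma 7 (2): any control set `Γ` covering
`L^{(k)}_{[q^{(s)}₁ X q^{(x)}₁]}(G^⋈)` transfers through `ι⁻¹` to a control set
covering `L^{(k)}_{[q^{(s)}₁ X q^{(x)}₁]}(G^∩)`. -/
theorem control_set_transfer {N T : Type} (G : CFG N T) (h2NF : TwoNF G)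
    (ws : List (List T)) (hb : IsBExpr ws)
    (X : N) (s x : ℕ) (hsx : s ≤ x) (hx : x < ws.length) (k : ℕ) (hk : 0 < k)
    (Γ : Set (List (CProd (NI N) ℕ)))
    (hcov : LangK (GBow G ws) k (((s, 0), X, (x, 0)) : NI N) ⊆
        LHat (GBow G ws) Γ (((s, 0), X, (x, 0)) : NI N) none) :
    LangK (GI G ws) k (((s, 0), X, (x, 0)) : NI N) ⊆
      LHat (GI G ws) {δ | δ.map (iota ws) ∈ Γ} (((s, 0), X, (x, 0)) : NI N) none :=
  control_set_transfer_general G h2NF ws X s x k Γ hcov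

end Paper
end

section
/- Let G = (Ξ, Σ, Δ) be a grammar in 2-normal form, b = w_1* … w_d* a bounded expression over Σ, b̃ = a_1* … a_d* over A = {a_1, …, a_d} disjoint from Σ, and G^∩, G^⋈ as defined. Then for all X ∈ Ξ and 1 ≤ s ≤ x ≤ d: L_{[q^{(s)}_1 X q^{(x)}_1]}(G^⋈) ⊆ b̃, i.e., every word of this language is of the form a_1^{i_1} ⋯ a_d^{i_d}. -/
/-!
Label every symbol of `G^⋈` with an interval of blocks of `b`: the nonterminal `[q X q']` spans
the blocks from that of `q` to that of `q'`, and the letter `a_r` spans only `r`. Blocks only grow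
along a run of `G^b`, and `ι` emits `a_r` only for a step of the run that completes `w_r`, so each
production of `G^⋈` rewrites a nonterminal into symbols whose spans lie inside its own and follow
one another from left to right; for a terminal production of length 2 this uses the intermediate
state of the two-step run of `G^b` that comes with it. Derivation steps preserve this ordering of
spans, so a terminal word derived from `[q^{(s)}_1 X q^{(x)}_1]` is a nondecreasing word over
`a_s, …, a_x`.
-/

namespace Paper

section SententialWords

variable {N T : Type}

lemma applyProd_append_cons_s16 (p : CProd N T) (u₁ u₂ : Word N T) (y : N ⊕ T) :
    applyProd p u₁.length (u₁ ++ y :: u₂) = u₁ ++ p.2 ++ u₂ := by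
  simp [applyProd]

lemma inl_not_mem_tw {X : N} {u : List T} : (Sum.inl X : N ⊕ T) ∉ (tw u : Word N T) := by
  simp [tw]

lemma getElem?_tw_append_singleton {u : List T} {X Y : N} {j : ℕ}
    (h : (tw u ++ [Sum.inl X] : Word N T)[j]? = some (Sum.inl Y)) : j = u.length ∧ Y = X := by
  have hlen : (tw u : Word N T).length = u.length := List.length_map _
  rcases lt_trichotomy j u.length with hj | rfl | hj
  · rw [List.getElem?_append_left (hlen ▸ hj)] at h
    exact absurd (List.mem_of_getElem? h) inl_not_mem_tw
  · simp_all
  · rw [List.getElem?_append_right (hlen ▸ hj.le), hlen, List.getElem?_singleton,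
      if_neg (by omega)] at h
    exact absurd h (by simp)

lemma tw_append_singleton_inj {u t : List T} {X Y : N}
    (h : (tw u ++ [Sum.inl X] : Word N T) = tw t ++ [Sum.inl Y]) : u = t ∧ X = Y := by
  obtain ⟨hut, hXY⟩ := List.append_inj' h rfl
  exact ⟨List.map_injective_iff.mpr Sum.inr_injective hut, by simpa using hXY⟩

lemma eq_of_kSeq_tw {G : CFG N T} {k : ℕ∞} {u : List T} {v : Word N T}
    {l : List (CProd N T × ℕ)} (h : KSeq G k (tw u) l v) : v = tw u := by
  cases h with
  | refl => rfl
  | step _ _ hj _ => exact absurd (List.mem_of_getElem? hj) inl_not_mem_tw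

end SententialWords

section SpanRefines

variable {N T β : Type} [Preorder β] (lo hi : N ⊕ T → β)

def SpanRefines (m : N ⊕ T) (z : Word N T) : Prop :=
  z.Pairwise (fun a b => hi a ≤ lo b) ∧ ∀ c ∈ z, lo m ≤ lo c ∧ hi c ≤ hi m

variable {lo hi}

lemma spanRefines_singleton {m c : N ⊕ T} (hmc : lo m ≤ lo c) (hcm : hi c ≤ hi m) :
    SpanRefines lo hi m [c] :=
  ⟨List.pairwise_singleton _ _, by simpa using ⟨hmc, hcm⟩⟩

lemma spanRefines_pair {m c d : N ⊕ T} (hc : lo c ≤ hi c) (hd : lo d ≤ hi d)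
    (hmc : lo m ≤ lo c) (hcd : hi c ≤ lo d) (hdm : hi d ≤ hi m) : SpanRefines lo hi m [c, d] :=
  ⟨List.pairwise_pair.mpr hcd, by
    simpa using ⟨⟨hmc, hcd.trans (hd.trans hdm)⟩, (hmc.trans hc).trans hcd, hdm⟩⟩

lemma SpanRefines.sublist {m : N ⊕ T} {z z' : Word N T} (h : SpanRefines lo hi m z)
    (hz : z'.Sublist z) : SpanRefines lo hi m z' :=
  ⟨h.1.sublist hz, fun c hc => h.2 c (hz.subset hc)⟩

lemma SpanRefines.replace {m y : N ⊕ T} {u₁ u₂ z : Word N T}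
    (hu : SpanRefines lo hi m (u₁ ++ y :: u₂)) (hz : SpanRefines lo hi y z) :
    SpanRefines lo hi m (u₁ ++ z ++ u₂) := by
  obtain ⟨hz_sorted, hz_span⟩ := hz
  simp only [SpanRefines, List.pairwise_append, List.pairwise_cons, List.mem_append,
    List.mem_cons] at hu ⊢
  obtain ⟨⟨hu₁, ⟨hy, hu₂⟩, hu₁₂⟩, hu_span⟩ := hu
  refine ⟨⟨⟨hu₁, hz_sorted, fun a ha b hb => (hu₁₂ a ha y (.inl rfl)).trans (hz_span b hb).1⟩,
    hu₂, ?_⟩, ?_⟩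
  · rintro a (ha | ha) b hb
    · exact hu₁₂ a ha b (.inr hb)
    · exact (hz_span a ha).2.trans (hy b hb)
  · rintro c ((hc | hc) | hc)
    · exact hu_span c (.inl hc)
    · have hy_span := hu_span y (.inr (.inl rfl))
      exact ⟨hy_span.1.trans (hz_span c hc).1, (hz_span c hc).2.trans hy_span.2⟩
    · exact hu_span c (.inr (.inr hc))

lemma SpanRefines.applyProd {m : N ⊕ T} {u : Word N T} {p : CProd N T} {j : ℕ}
    (hu : SpanRefines lo hi m u) (hj : u[j]? = some (Sum.inl p.1))
    (hp : SpanRefines lo hi (Sum.inl p.1) p.2) : SpanRefines lo hi m (applyProd p j u) := by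
  obtain ⟨hj_lt, hj_eq⟩ := List.getElem?_eq_some_iff.mp hj
  obtain ⟨u₁, u₂, rfl, rfl⟩ : ∃ u₁ u₂, u = u₁ ++ Sum.inl p.1 :: u₂ ∧ u₁.length = j :=
    ⟨u.take j, u.drop (j + 1), by rw [← hj_eq, ← List.drop_eq_getElem_cons hj_lt,
      List.take_append_drop], List.length_take_of_le hj_lt.le⟩
  rw [applyProd_append_cons_s16]
  exact hu.replace hp

lemma SpanRefines.of_kSeq {G : CFG N T}
    (hG : ∀ p ∈ G.prods, SpanRefines lo hi (Sum.inl p.1) p.2)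
    {k : ℕ∞} {u v : Word N T} {l : List (CProd N T × ℕ)} (h : KSeq G k u l v) {m : N ⊕ T}
    (hu : SpanRefines lo hi m u) : SpanRefines lo hi m v := by
  induction h with
  | refl => exact hu
  | step _ hp hj _ ih => exact ih (hu.applyProd hj (hG _ hp))

lemma spanRefines_of_mem_lang {G : CFG N T}
    (hG : ∀ p ∈ G.prods, SpanRefines lo hi (Sum.inl p.1) p.2) {X : N} {w : List T}
    (hw : w ∈ Lang G X) : SpanRefines lo hi (Sum.inl X) (tw w) := by
  obtain ⟨u, v, γ, rfl, js, -, h⟩ := hw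
  have hsent : sent u (none : Option N) v = tw (u ++ v) := by simp [sent, tw]
  exact hsent ▸ (spanRefines_singleton le_rfl le_rfl).of_kSeq hG h

end SpanRefines

section LetterBounded

lemma mem_letterLang_cons {α : Type} {a : α} {as w : List α} :
    w ∈ letterLang (a :: as) ↔ ∃ n, ∃ v ∈ letterLang as, w = List.replicate n a ++ v := by
  simp [letterLang, BLang]

lemma mem_letterLang_of_pairwise {α : Type} [Preorder α] {as w : List α}
    (has : as.Pairwise (· < ·)) (hw : w.Pairwise (· ≤ ·)) (hmem : ∀ c ∈ w, c ∈ as) :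
    w ∈ letterLang as := by
  induction as generalizing w with
  | nil =>
    obtain rfl : w = [] := List.eq_nil_iff_forall_not_mem.mpr fun c hc => by simpa using hmem c hc
    rfl
  | cons a as ih =>
    rw [List.pairwise_cons] at has
    rw [mem_letterLang_cons]
    induction w with
    | nil => exact ⟨0, [], ih has.2 List.Pairwise.nil (by simp), rfl⟩
    | cons y w ihw =>
      have hyw := List.pairwise_cons.mp hw
      by_cases hya : y = a
      · obtain ⟨n, v, hv, rfl⟩ := ihw hyw.2 fun c hc => hmem c (.tail _ hc)
        exact ⟨n + 1, v, hv, by simp [hya, List.replicate_succ]⟩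
      · have hy : y ∈ as := (List.mem_cons.mp (hmem y (.head _))).resolve_left hya
        refine ⟨0, y :: w, ih has.2 hw fun c hc => ?_, rfl⟩
        refine (List.mem_cons.mp (hmem c hc)).resolve_left ?_
        rintro rfl
        have hyc : y ≤ c := by
          rcases List.mem_cons.mp hc with rfl | hc
          exacts [le_rfl, hyw.1 c hc]
        exact lt_irrefl _ ((has.1 y hy).trans_le hyc)

end LetterBounded

section BoundedGrammar

variable {T : Type} {ws : List (List T)}

inductive RunB_s16 (ws : List (List T)) : QB → List T → QB → Prop
  | nil (q : QB) : RunB_s16 ws q [] q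
  | cons {q qm q' : QB} {a : T} {t : List T} :
      ((q, [Sum.inr a, Sum.inl qm]) : CProd QB T) ∈ DeltaB ws →
      RunB_s16 ws qm t q' → RunB_s16 ws q (a :: t) q'

lemma rhs_of_mem_deltaB {p : CProd QB T} (hp : p ∈ DeltaB ws) :
    (∃ a qm, p.2 = [Sum.inr a, Sum.inl qm]) ∨ p.2 = [] := by
  rcases hp with ⟨s, i, a, -, -, -, rfl⟩ | ⟨s, s', a, -, -, -, rfl⟩ | ⟨s, -, rfl⟩
  · exact .inl ⟨a, _, rfl⟩
  · exact .inl ⟨a, _, rfl⟩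
  · exact .inr rfl

lemma block_le_of_mem_deltaB {q qm : QB} {a : T}
    (h : ((q, [Sum.inr a, Sum.inl qm]) : CProd QB T) ∈ DeltaB ws) : q.1 ≤ qm.1 := by
  rcases h with ⟨s, i, a', -, -, -, h⟩ | ⟨s, s', a', hss', -, -, h⟩ | ⟨s, -, h⟩ <;>
    simp only [Prod.ext_iff, List.cons.injEq, Sum.inl.injEq] at h
  · rw [h.1.1, h.2.2.1.1]
  · rw [h.1.1, h.2.2.1.1]; exact hss'
  · simp at h

lemma snd_eq_zero_of_mem_deltaB {q qm : QB} {a : T}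
    (h : ((q, [Sum.inr a, Sum.inl qm]) : CProd QB T) ∈ DeltaB ws)
    (hq : ¬ q.2 + 1 < lenB ws q.1) : qm.2 = 0 := by
  rcases h with ⟨s, i, a', -, hi, -, h⟩ | ⟨s, s', a', -, -, -, h⟩ | ⟨s, -, h⟩ <;>
    simp only [Prod.ext_iff, List.cons.injEq, Sum.inl.injEq] at h
  · exact absurd (h.1.1 ▸ h.1.2 ▸ hi) hq
  · exact h.2.2.1.2
  · simp at h

lemma runB_of_kSeq {w w' : Word QB T} {l : List (CProd QB T × ℕ)}
    (h : KSeq (GB ws) ⊤ w l w') {u t : List T} {q q' : QB}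
    (hw : w = tw u ++ [Sum.inl q]) (hw' : w' = tw t ++ [Sum.inl q']) :
    ∃ t', t = u ++ t' ∧ RunB_s16 ws q t' q' := by
  induction h generalizing u q with
  | refl =>
    obtain ⟨rfl, rfl⟩ := tw_append_singleton_inj (hw ▸ hw')
    exact ⟨[], by simp, .nil q⟩
  | @step _ _ p j _ _ hp hj hrest ih =>
    subst hw
    obtain ⟨rfl, hpq⟩ := getElem?_tw_append_singleton hj
    have hstep : applyProd p u.length (tw u ++ [Sum.inl q]) = tw u ++ p.2 := by
      simpa [tw] using applyProd_append_cons_s16 p (tw u) [] (Sum.inl q)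
    rw [hstep] at hrest ih
    rcases rhs_of_mem_deltaB hp with ⟨a, qm, hrhs⟩ | hrhs
    · obtain ⟨t', rfl, hrun⟩ := ih (u := u ++ [a]) (q := qm) (by simp [hrhs, tw]) hw'
      have hp' : p = (q, [Sum.inr a, Sum.inl qm]) := Prod.ext hpq hrhs
      exact ⟨a :: t', by simp, .cons (hp' ▸ hp) hrun⟩
    · rw [hrhs, List.append_nil] at hrest
      have hq' : (Sum.inl q' : QB ⊕ T) ∈ tw u := by
        rw [← eq_of_kSeq_tw hrest, hw']
        simp
      exact absurd hq' inl_not_mem_tw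

lemma runB_of_derB {q q' : QB} {w : List T} (h : DerB ws q w q') : RunB_s16 ws q w q' := by
  obtain ⟨γ, js, -, h⟩ := h
  obtain ⟨t, rfl, hrun⟩ := runB_of_kSeq h (u := []) (q := q) (by simp [tw]) rfl
  exact hrun

end BoundedGrammar

section Bowtie

variable {N T : Type} {ws : List (List T)}

def blockLo : NI N ⊕ ℕ → ℕ := Sum.elim (fun n => n.1.1) id

def blockHi : NI N ⊕ ℕ → ℕ := Sum.elim (fun n => n.2.2.1) id

lemma iotaMid_block_mem_Icc {q q' : QB} {X : N} {a b : T} (h : DerB ws q [a, b] q') :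
    q.1 ≤ (iotaMid ws (q, X, q') a b).1 ∧ (iotaMid ws (q, X, q') a b).1 ≤ q'.1 := by
  obtain ⟨qm, hq, hqm⟩ : ∃ qm, ((q, [Sum.inr a, Sum.inl qm]) : CProd QB T) ∈ DeltaB ws ∧
      ((qm, [Sum.inr b, Sum.inl q']) : CProd QB T) ∈ DeltaB ws := by
    rcases runB_of_derB h with _ | ⟨hq, _ | ⟨hqm, ⟨⟩⟩⟩
    exact ⟨_, hq, hqm⟩
  unfold iotaMid
  split_ifs with hwrap
  · exact ⟨le_rfl, (block_le_of_mem_deltaB hq).trans (block_le_of_mem_deltaB hqm)⟩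
  · have hqm0 : qm = (qm.1, 0) := Prod.ext rfl (snd_eq_zero_of_mem_deltaB hq hwrap)
    rw [hqm0] at hq hqm
    obtain ⟨h₁, h₂⟩ := Nat.sInf_mem (s := {y : ℕ |
      ((q, [Sum.inr a, Sum.inl (y, 0)]) : CProd QB T) ∈ DeltaB ws ∧
        (((y, 0) : QB), [Sum.inr b, Sum.inl q']) ∈ DeltaB ws}) ⟨qm.1, hq, hqm⟩
    exact ⟨block_le_of_mem_deltaB h₁, block_le_of_mem_deltaB h₂⟩

lemma spanRefines_iotaRhs {G : CFG N T} (h2NF : TwoNF G) {p : CProd (NI N) T}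
    (hp : p ∈ DeltaI G ws) :
    SpanRefines blockLo blockHi (Sum.inl p.1) (iotaRhs ws p.1 p.2) := by
  obtain ⟨q, q', X, ⟨-, -, hqq'⟩, hp⟩ := hp
  rcases hp with ⟨w, hX, hder, rfl⟩ | ⟨Y, -, rfl⟩ | ⟨a, Y, qm, -, hstep, ⟨-, -, hqm⟩, rfl⟩ |
    ⟨a, Y, qm, -, hstep, ⟨-, -, hqm⟩, rfl⟩ | ⟨Y, Z, qm, -, ⟨-, -, hqm⟩, ⟨-, -, hqm'⟩, rfl⟩
  · match w, h2NF _ hX with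
    | [], _ => exact ⟨List.Pairwise.nil, by simp [iotaRhs, tw]⟩
    | [a], _ =>
      refine SpanRefines.sublist (spanRefines_singleton (c := Sum.inr q.1) le_rfl hqq') ?_
      simp only [tw, List.map_cons, List.map_nil, iotaRhs]
      split_ifs <;> simp
    | [a, b], _ =>
      obtain ⟨hmid₁, hmid₂⟩ := iotaMid_block_mem_Icc (X := X) hder
      refine SpanRefines.sublist (spanRefines_pair (c := Sum.inr q.1)
        (d := Sum.inr (iotaMid ws (q, X, q') a b).1) le_rfl le_rfl le_rfl hmid₁ hmid₂) ?_
      simp only [tw, List.map_cons, List.map_nil, iotaRhs]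
      split_ifs <;> simp
    | _ :: _ :: _ :: _, hlen => simp [tw] at hlen
  · exact spanRefines_singleton (c := Sum.inl (q, Y, q')) le_rfl le_rfl
  · refine SpanRefines.sublist (spanRefines_pair (c := Sum.inr q.1) (d := Sum.inl (qm, Y, q'))
      le_rfl hqm le_rfl (block_le_of_mem_deltaB hstep) le_rfl) ?_
    simp only [iotaRhs]
    split_ifs <;> simp
  · refine SpanRefines.sublist (spanRefines_pair (c := Sum.inl (q, Y, qm)) (d := Sum.inr qm.1)
      hqm le_rfl le_rfl le_rfl (block_le_of_mem_deltaB hstep)) ?_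
    simp only [iotaRhs]
    split_ifs <;> simp
  · exact spanRefines_pair (c := Sum.inl (q, Y, qm)) (d := Sum.inl (qm, Z, q')) hqm hqm' le_rfl
      le_rfl le_rfl

lemma spanRefines_gBow {G : CFG N T} (h2NF : TwoNF G) :
    ∀ p ∈ (GBow G ws).prods, SpanRefines blockLo blockHi (Sum.inl p.1) p.2 := by
  rintro _ ⟨p, hp, rfl⟩
  exact spanRefines_iotaRhs h2NF hp

end Bowtie

theorem bowtie_letter_bounded_general {N T : Type} (G : CFG N T) (h2NF : TwoNF G)
    (ws : List (List T))
    (X : N) (s x : ℕ) (hx : x < ws.length) :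
    Lang (GBow G ws) (((s, 0), X, (x, 0)) : NI N) ⊆ letterLang (List.range ws.length) := by
  intro w hw
  obtain ⟨hsorted, hspan⟩ := spanRefines_of_mem_lang (spanRefines_gBow h2NF) hw
  rw [tw, List.pairwise_map] at hsorted
  exact mem_letterLang_of_pairwise List.pairwise_lt_range hsorted fun c hc =>
    List.mem_range.mpr ((hspan _ (List.mem_map_of_mem hc)).2.trans_lt hx)

/-- Fact 1: `L_{[q^{(s)}₁ X q^{(x)}₁]}(G^⋈) ⊆ b̃`, where the letters
`a₁, …, a_d` of `b̃` are represented by `0, …, d-1 : ℕ`. -/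
theorem bowtie_letter_bounded {N T : Type} (G : CFG N T) (h2NF : TwoNF G)
    (ws : List (List T)) (hb : IsBExpr ws)
    (X : N) (s x : ℕ) (hsx : s ≤ x) (hx : x < ws.length) :
    Lang (GBow G ws) (((s, 0), X, (x, 0)) : NI N) ⊆ letterLang (List.range ws.length) :=
  bowtie_letter_bounded_general G h2NF ws X s x hx

end Paper
end
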